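/- (Action of the twisted left multiplication by ι(π) on the coordinates.) Assume n ≥ 1, 2n > d and m = 2n + d − 1. Let a′ ∈ U_E, set a := π·a′ and R := π^{−(d+1)}·(τ(a) + a), and let B ∈ p_E, C, D ∈ U_E satisfy B + πⁿ·R⁻¹ ∈ p_E^{m+1} and ε^{(d+1)/2}·R⁻¹·D⁻¹·τ(C) ∈ U_E^{m+1}. Set x := e₋(a)·v̇·e₋(B)·e₀(C, D). Then a′ + 1 + ε ∈ U_E, and there exist B″ ∈ p_E, D″ ∈ U_E and j ∈ I_E^{2m+1} such that ι(π)·x·e₀(π, τ(π))⁻¹ = e₋(ε·π·(a′ + 1 + ε)⁻¹)·v̇·e₋(B″)·e₀(ε·C·(a′ + 1 + ε)⁻¹, D″)·j. -/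

import Mathlib

/-
The identity holds exactly, with `j = 1`. Put `S = a' + 1 + ε`; since `τ(π) = επ`, the product
`ι(π) e₋(πa')` is `[[πS, 1], [επ², 0]] = e₋(επ/S) · [[πS, 1], [0, επ/S]]`, using `-1 = 1` in
characteristic 2. The upper triangular factor is carried across the antidiagonal `v̇`, where it
turns into a lower triangular matrix; this absorbs `e₋(B)` and the diagonal factors and splits
again as `e₋(B'') e₀(εC/S, D'')`. In characteristic 2, `S = a' + (ε - 1)` with `v(a') = 0 <
v(ε - 1)`, so `S` is a unit.
-/

open Matrix

noncomputable section

namespace ADLV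

variable {E : Type*} [Field E]

/-- `e₋(a)`, the lower unipotent matrix. -/
def em (a : E) : Matrix (Fin 2) (Fin 2) E := !![1, 0; a, 1]

/-- `e₊(a)`, the upper unipotent matrix. -/
def ep (a : E) : Matrix (Fin 2) (Fin 2) E := !![1, a; 0, 1]

/-- `e₀(c, c')`, the diagonal matrix. -/
def e0 (c c' : E) : Matrix (Fin 2) (Fin 2) E := !![c, 0; 0, c']

/-- The congruence subgroup `I_E^r`, as a set of matrices. -/
def IEr (v : E → WithTop ℤ) (r : ℤ) : Set (Matrix (Fin 2) (Fin 2) E) :=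
  {g | (((r + 1) / 2 : ℤ) : WithTop ℤ) ≤ v (g 0 0 - 1) ∧
    ((r / 2 : ℤ) : WithTop ℤ) ≤ v (g 0 1) ∧
    ((r / 2 + 1 : ℤ) : WithTop ℤ) ≤ v (g 1 0) ∧
    (((r + 1) / 2 : ℤ) : WithTop ℤ) ≤ v (g 1 1 - 1)}

/-- The Iwahori subgroup `I_E`, as a set of matrices. -/
def IwE (v : E → WithTop ℤ) : Set (Matrix (Fin 2) (Fin 2) E) :=
  {g | v (g 0 0) = 0 ∧ (0 : WithTop ℤ) ≤ v (g 0 1) ∧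
    (1 : WithTop ℤ) ≤ v (g 1 0) ∧ v (g 1 1) = 0}

/-- `P_r = 1 + εⁿ π^{2n} r τ(r)`. -/
def Pel (τ : E →+* E) (ε π : E) (n : ℤ) (r : E) : E := 1 + ε ^ n * π ^ (2 * n) * r * τ r

/-- `i(t, r) = e₊(r) e₋(εⁿ π^{2n} τ(r) P_r⁻¹) e₀(t, τ(t) P_r⁻¹)`. -/
def imat (τ : E →+* E) (ε π : E) (n : ℤ) (t r : E) : Matrix (Fin 2) (Fin 2) E :=
  ep r * em (ε ^ n * π ^ (2 * n) * τ r * (Pel τ ε π n r)⁻¹) * e0 t (τ t * (Pel τ ε π n r)⁻¹)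

/-- The element `ẇ`. -/
def wdot (ε π : E) (n : ℤ) : Matrix (Fin 2) (Fin 2) E :=
  !![0, π ^ (-n); π ^ n, 0] * e0 (ε ^ (n / 2)) (ε ^ (-((n + 1) / 2)))

/-- The element `v̇`. -/
def vdot (π : E) (n d : ℤ) : Matrix (Fin 2) (Fin 2) E :=
  !![0, π ^ (-((d + 1) / 2 + (n + 1) / 2)); π ^ ((d + 1) / 2 + n / 2), 0]

/-- `ι(c₀ + c₁ π)`, the embedding of `E` into `Mat₂(F)` on the element `c₀ + c₁ π`, `c₀, c₁ ∈ F`. -/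
def iota (Δ ϖ : E) (c₀ c₁ : E) : Matrix (Fin 2) (Fin 2) E := !![c₀ + Δ * c₁, c₁; ϖ * c₁, c₀]


lemma exists_addValuation_coe_eq {R : Type*} [Ring R] [Nontrivial R] {v : R → WithTop ℤ}
    (hv_top : ∀ x : R, v x = ⊤ ↔ x = 0) (hv_mul : ∀ x y : R, v (x * y) = v x + v y)
    (hv_add : ∀ x y : R, min (v x) (v y) ≤ v (x + y)) :
    ∃ w : AddValuation R (WithTop ℤ), ⇑w = v := by
  have h1 : v 1 = 0 := by
    refine WithTop.add_right_cancel (z := v 1) ((hv_top 1).not.mpr one_ne_zero) ?_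
    rw [← hv_mul, mul_one, zero_add]
  exact ⟨AddValuation.of v ((hv_top 0).mpr rfl) h1 hv_add hv_mul, rfl⟩

lemma AddValuation.map_zpow_of_eq_one {K : Type*} [Field K] (w : AddValuation K (WithTop ℤ))
    {π : K} (hπ : w π = 1) (k : ℤ) : w (π ^ k) = k := by
  have hpow (n : ℕ) : w (π ^ n) = ((n : ℤ) : WithTop ℤ) := by
    rw [AddValuation.map_pow, hπ, nsmul_one]; rfl
  rcases k with n | n
  · rw [Int.ofNat_eq_natCast, zpow_natCast, hpow]
  · rw [zpow_negSucc, AddValuation.map_inv, hpow]; rfl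

lemma one_mem_IEr {v : E → WithTop ℤ} (hv_zero : v 0 = ⊤) (r : ℤ) :
    (1 : Matrix (Fin 2) (Fin 2) E) ∈ IEr v r := by
  simp [IEr, hv_zero]

lemma e0_mul_e0 (c c' e e' : E) : e0 c c' * e0 e e' = e0 (c * e) (c' * e') := by
  simp [e0]

lemma inv_e0 {c c' : E} (hc : c ≠ 0) (hc' : c' ≠ 0) : (e0 c c')⁻¹ = e0 c⁻¹ c'⁻¹ :=
  Matrix.inv_eq_right_inv <| by
    rw [e0_mul_e0, mul_inv_cancel₀ hc, mul_inv_cancel₀ hc']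
    exact Matrix.one_fin_two.symm

lemma em_mul_upper {x z c : E} (hc : c * x = z) :
    em c * !![x, 1; 0, -c] = !![x, 1; z, 0] := by
  ext i j; fin_cases i <;> fin_cases j <;> simp [em, hc]

lemma upper_mul_antidiag (x y : E) {P Q K : E} (hK : P * K = Q) :
    !![x, 1; 0, y] * !![0, P; Q, 0] = !![0, P; Q, 0] * !![y, 0; K, x] := by
  ext i j; fin_cases i <;> fin_cases j <;> simp [hK, mul_comm]

lemma lower_mul_em {y x z b e : E} (he : e * y = z + x * b) :
    !![y, 0; z, x] * em b = em e * e0 y x := by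
  ext i j; fin_cases i <;> fin_cases j <;> simp [em, e0, he]

lemma iota_mul_em_vdot_em_e0 [CharP E 2] {π ε : E} (hπ : π ≠ 0) (hε : ε ≠ 0) {d : ℤ}
    (hd : Odd d) (n : ℤ) {a' : E} (hS : a' + 1 + ε ≠ 0) (B C D : E) :
    iota (π + ε * π) (π * (ε * π)) 0 1 * (em (π * a') * vdot π n d * em B * e0 C D) *
        (e0 π (ε * π))⁻¹ =
      em (ε * π * (a' + 1 + ε)⁻¹) * vdot π n d *
        em ((a' + 1 + ε) * (π ^ (d + n) + (a' + 1 + ε) * B) * ε⁻¹) *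
        e0 (ε * C * (a' + 1 + ε)⁻¹) ((a' + 1 + ε) * D * ε⁻¹) := by
  set S := a' + 1 + ε
  have h_iota : iota (π + ε * π) (π * (ε * π)) 0 1 * em (π * a') =
      !![π * S, 1; π * (ε * π), 0] := by
    simp only [iota, em, Matrix.mul_fin_two, S]
    ring_nf
  have hvdot : π ^ (-((d + 1) / 2 + (n + 1) / 2)) * π ^ (d + n + 1) =
      π ^ ((d + 1) / 2 + n / 2) := by
    rw [← zpow_add₀ hπ]; congr 1; obtain ⟨t, rfl⟩ := hd; omega
  calc _ = (iota (π + ε * π) (π * (ε * π)) 0 1 * em (π * a')) * vdot π n d * em B *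
        (e0 C D * (e0 π (ε * π))⁻¹) := by simp only [Matrix.mul_assoc]
    _ = em (ε * π * S⁻¹) * (!![π * S, 1; 0, ε * π * S⁻¹] * vdot π n d) * em B *
          e0 (C * π⁻¹) (D * (ε * π)⁻¹) := by
        rw [h_iota, ← em_mul_upper (c := ε * π * S⁻¹) (by field_simp), CharTwo.neg_eq,
          inv_e0 hπ (mul_ne_zero hε hπ), e0_mul_e0]
        simp only [Matrix.mul_assoc]
    _ = em (ε * π * S⁻¹) * vdot π n d * (!![ε * π * S⁻¹, 0; π ^ (d + n + 1), π * S] * em B) *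
          e0 (C * π⁻¹) (D * (ε * π)⁻¹) := by
        rw [vdot, upper_mul_antidiag _ _ hvdot]
        simp only [Matrix.mul_assoc]
    _ = _ := by
        rw [lower_mul_em (e := S * (π ^ (d + n) + S * B) * ε⁻¹)
          (by rw [zpow_add_one₀ hπ]; field_simp)]
        simp only [Matrix.mul_assoc, e0_mul_e0]
        congr 4 <;> field_simp

theorem statement13_general [CharP E 2]
    (τ : E →+* E)
    (v : E → WithTop ℤ)
    (hv_top : ∀ x : E, v x = ⊤ ↔ x = 0)
    (hv_mul : ∀ x y : E, v (x * y) = v x + v y)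
    (hv_add : ∀ x y : E, min (v x) (v y) ≤ v (x + y))
    (π : E) (hπ : v π = 1)
    (d : ℤ) (hd : 0 < d) (hdodd : Odd d)
    (ε : E) (hε : ε = τ π / π)
    (hεd : v (ε - 1) = (d : WithTop ℤ))
    (Δ : E) (hΔ : Δ = π + τ π) (ϖ : E) (hϖ : ϖ = π * τ π)
    (n m : ℤ) (hn : 1 ≤ n)
    (a' : E) (ha' : v a' = 0) (a : E) (ha : a = π * a')
    (B : E) (hB : (1 : WithTop ℤ) ≤ v B) (C : E) (D : E) (hD : v D = 0)
    (x : Matrix (Fin 2) (Fin 2) E) (hx : x = em a * vdot π n d * em B * e0 C D) :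
    v (a' + 1 + ε) = 0 ∧
    ∃ B'' D'' : E, (1 : WithTop ℤ) ≤ v B'' ∧ v D'' = 0 ∧
      ∃ j ∈ IEr v (2 * m + 1),
        iota Δ ϖ 0 1 * x * (e0 π (τ π))⁻¹ =
          em (ε * π * (a' + 1 + ε)⁻¹) * vdot π n d * em B'' *
            e0 (ε * C * (a' + 1 + ε)⁻¹) D'' * j := by
  obtain ⟨w, rfl⟩ := exists_addValuation_coe_eq hv_top hv_mul hv_add
  have hπ0 : π ≠ 0 := w.ne_top_iff.mp (by simp [hπ])
  have hε_one : w 1 < w (ε - 1) := by rw [hεd, w.map_one]; exact_mod_cast hd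
  have hvε : w ε = 0 := by
    rw [← sub_add_cancel ε 1, w.map_add_eq_of_lt_right hε_one, w.map_one]
  have hvS : w (a' + 1 + ε) = 0 := by
    rw [show a' + 1 + ε = a' + (ε - 1) by rw [CharTwo.sub_eq_add]; ring,
      w.map_add_eq_of_lt_left (by rwa [ha', ← w.map_one]), ha']
  have hε0 : ε ≠ 0 := w.ne_top_iff.mp (by simp [hvε])
  have hS0 : a' + 1 + ε ≠ 0 := w.ne_top_iff.mp (by simp [hvS])
  have hτπ : τ π = ε * π := by rw [hε, div_mul_cancel₀ _ hπ0]
  refine ⟨hvS, (a' + 1 + ε) * (π ^ (d + n) + (a' + 1 + ε) * B) * ε⁻¹, (a' + 1 + ε) * D * ε⁻¹,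
    ?_, by simp [hvS, hvε, hD], 1, one_mem_IEr w.map_zero _, ?_⟩
  · simp only [w.map_mul, w.map_inv, hvS, hvε, zero_add, neg_zero, add_zero]
    refine w.map_le_add ?_ (by rwa [w.map_mul, hvS, zero_add])
    rw [AddValuation.map_zpow_of_eq_one w hπ]
    exact_mod_cast (by omega : 1 ≤ d + n)
  · rw [mul_one, hx, ha, hΔ, hϖ, hτπ]
    exact iota_mul_em_vdot_em_e0 hπ0 hε0 hdodd n hS0 B C D

theorem statement13 [CharP E 2]
    (τ : E →+* E) (hττ : ∀ x : E, τ (τ x) = x) (hτne : τ ≠ RingHom.id E)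
    (v : E → WithTop ℤ)
    (hv_top : ∀ x : E, v x = ⊤ ↔ x = 0)
    (hv_mul : ∀ x y : E, v (x * y) = v x + v y)
    (hv_add : ∀ x y : E, min (v x) (v y) ≤ v (x + y))
    (hv_tau : ∀ x : E, v (τ x) = v x)
    (π : E) (hπ : v π = 1)
    (hv_even : ∀ x : E, τ x = x → ∀ k : ℤ, v x = (k : WithTop ℤ) → Even k)
    (hbasis : ∀ y : E, ∃ c₀ c₁ : E, τ c₀ = c₀ ∧ τ c₁ = c₁ ∧ y = c₀ + c₁ * π)
    (d : ℤ) (hd : 0 < d) (hdodd : Odd d)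
    (ε : E) (hε : ε = τ π / π)
    (hεd : v (ε - 1) = (d : WithTop ℤ))
    (Δ : E) (hΔ : Δ = π + τ π) (ϖ : E) (hϖ : ϖ = π * τ π)
    (n m : ℤ) (hn : 1 ≤ n) (h2n : d < 2 * n) (hm : m = 2 * n + d - 1)
    (a' : E) (ha' : v a' = 0) (a : E) (ha : a = π * a')
    (R : E) (hR : R = π ^ (-(d + 1)) * (τ a + a))
    (B : E) (hB : (1 : WithTop ℤ) ≤ v B) (C : E) (hC : v C = 0) (D : E) (hD : v D = 0)
    (hBR : ((m + 1 : ℤ) : WithTop ℤ) ≤ v (B + π ^ n * R⁻¹))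
    (hCD : ((m + 1 : ℤ) : WithTop ℤ) ≤ v (ε ^ ((d + 1) / 2) * R⁻¹ * D⁻¹ * τ C - 1))
    (x : Matrix (Fin 2) (Fin 2) E) (hx : x = em a * vdot π n d * em B * e0 C D) :
    v (a' + 1 + ε) = 0 ∧
    ∃ B'' D'' : E, (1 : WithTop ℤ) ≤ v B'' ∧ v D'' = 0 ∧
      ∃ j ∈ IEr v (2 * m + 1),
        iota Δ ϖ 0 1 * x * (e0 π (τ π))⁻¹ =
          em (ε * π * (a' + 1 + ε)⁻¹) * vdot π n d * em B'' *
            e0 (ε * C * (a' + 1 + ε)⁻¹) D'' * j :=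
  statement13_general τ v hv_top hv_mul hv_add π hπ d hd hdodd ε hε hεd Δ hΔ ϖ hϖ n m hn a' ha' a ha
    B hB C D hD x hx

end ADLV
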